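/- arXiv:0910.2922 — 2 statements merged into one kernel-verified Lean document; each statement's English description precedes it below -/
import Mathlib

section
/- Under the assumptions above, ∫ (L^{x+h}_t − L^x_t)² dx = 2( 2α_{2,t}(0) − α_{2,t}(h) − α_{2,t}(−h) ) for all h ∈ ℝ. -/
/-!
Let `F a = ∫ L x * L (x + a) dx` be the autocorrelation of `L`; expanding the square gives
`∫ (L (x + h) - L x)² dx = 2 (F 0 - F h)`, so it suffices to show `F a = α a + α (-a)`.
For bounded measurable `φ`, compute `∫∫_{[0,t]²} φ (W s - W r) dr ds` in two ways. The occupation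
formula, applied first in `r` and then in `s`, turns it into `∫ φ F`. Splitting the square along
its diagonal into two triangles and applying the self-intersection formula to each, it equals
`∫ φ a (α a + α (-a)) da`. Both densities are continuous, so testing against indicators of compact
sets identifies them everywhere.
-/

open MeasureTheory Set Function

theorem MeasureTheory.Measure.prod_diagonal_eq_zero {α : Type*} [MeasurableSpace α]
    [MeasurableEq α] (μ ν : Measure α) [SFinite ν] [NullSingletonClass ν] :
    μ.prod ν (diagonal α) = 0 := by
  rw [Measure.prod_apply measurableSet_diagonal]
  simp [preimage, diagonal]

section Triangles

variable {E : Type*} [NormedAddCommGroup E] [NormedSpace ℝ E]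

theorem integral_prod_eq_setIntegral_le_add_swap (μ : Measure ℝ) [SFinite μ]
    [NullSingletonClass μ] {f : ℝ × ℝ → E} (hf : Integrable f (μ.prod μ)) :
    ∫ p, f p ∂μ.prod μ =
      ∫ p in {p | p.2 ≤ p.1}, f p ∂μ.prod μ + ∫ p in {p | p.2 ≤ p.1}, f p.swap ∂μ.prod μ := by
  have hswap : ∫ p in {p : ℝ × ℝ | p.2 ≤ p.1}, f p.swap ∂μ.prod μ =
      ∫ p in {p : ℝ × ℝ | p.1 ≤ p.2}, f p ∂μ.prod μ :=
    Measure.measurePreserving_swap.setIntegral_preimage_emb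
      MeasurableEquiv.prodComm.measurableEmbedding f {p | p.1 ≤ p.2}
  have hdisj : AEDisjoint (μ.prod μ) {p : ℝ × ℝ | p.2 ≤ p.1} {p | p.1 ≤ p.2} :=
    measure_mono_null (fun p hp => le_antisymm hp.2 hp.1) (Measure.prod_diagonal_eq_zero μ μ)
  rw [hswap, ← setIntegral_union₀ hdisj
    (measurableSet_le measurable_fst measurable_snd).nullMeasurableSet
    hf.integrableOn hf.integrableOn, ← setIntegral_univ]
  congr
  ext p
  simp [le_total]

variable {t : ℝ} {k : ℝ → ℝ → E}

theorem intervalIntegral_triangle_eq_setIntegral (ht : 0 ≤ t)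
    (hk : Integrable (uncurry k) ((volume.restrict (Ioc 0 t)).prod (volume.restrict (Ioc 0 t)))) :
    ∫ s in 0..t, ∫ r in 0..s, k s r =
      ∫ p in {p | p.2 ≤ p.1}, uncurry k p
        ∂(volume.restrict (Ioc 0 t)).prod (volume.restrict (Ioc 0 t)) := by
  have hT : MeasurableSet {p : ℝ × ℝ | p.2 ≤ p.1} := measurableSet_le measurable_snd measurable_fst
  rw [← integral_indicator hT, integral_prod _ (hk.indicator hT),
    intervalIntegral.integral_of_le ht]
  refine setIntegral_congr_fun measurableSet_Ioc fun s hs => ?_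
  rw [← intervalIntegral.integral_indicator ⟨hs.1.le, hs.2⟩, intervalIntegral.integral_of_le ht]
  rfl

theorem intervalIntegral_square_eq_triangle_add_triangle_swap (ht : 0 ≤ t)
    (hk : Integrable (uncurry k) ((volume.restrict (Ioc 0 t)).prod (volume.restrict (Ioc 0 t)))) :
    ∫ s in 0..t, ∫ r in 0..t, k s r =
      (∫ s in 0..t, ∫ r in 0..s, k s r) + ∫ s in 0..t, ∫ r in 0..s, k r s := by
  have hk' : Integrable (uncurry (flip k))
      ((volume.restrict (Ioc 0 t)).prod (volume.restrict (Ioc 0 t))) := hk.swap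
  rw [intervalIntegral_triangle_eq_setIntegral ht hk,
    show (∫ s in 0..t, ∫ r in 0..s, k r s) = ∫ s in 0..t, ∫ r in 0..s, flip k s r from rfl,
    intervalIntegral_triangle_eq_setIntegral ht hk', intervalIntegral.integral_of_le ht]
  simp_rw [intervalIntegral.integral_of_le ht]
  exact (integral_prod _ hk).symm.trans <| integral_prod_eq_setIntegral_le_add_swap _ hk

end Triangles

theorem Continuous.eq_of_forall_setIntegral_isCompact_eq {X : Type*} [TopologicalSpace X]
    [MeasurableSpace X] [BorelSpace X] [SigmaCompactSpace X] [R1Space X] {μ : Measure X}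
    [IsLocallyFiniteMeasure μ] [μ.IsOpenPosMeasure] {f g : X → ℝ} (hf : Continuous f)
    (hg : Continuous g) (hfg : ∀ K, IsCompact K → ∫ x in K, f x ∂μ = ∫ x in K, g x ∂μ) :
    f = g := by
  refine (hf.ae_eq_iff_eq μ hg).1 ?_
  have hsub := ae_eq_zero_of_forall_setIntegral_isCompact_eq_zero' (μ := μ)
    (hf.sub hg).locallyIntegrable fun K hK => ?_
  · filter_upwards [hsub] with x hx using sub_eq_zero.1 hx
  · change ∫ x in K, f x - g x ∂μ = 0
    rw [integral_sub (hf.locallyIntegrable.integrableOn_isCompact hK)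
      (hg.locallyIntegrable.integrableOn_isCompact hK), hfg K hK, sub_self]

theorem integral_indicator_one_mul {X : Type*} [MeasurableSpace X] {μ : Measure X} {s : Set X}
    (hs : MeasurableSet s) (f : X → ℝ) : ∫ x, s.indicator 1 x * f x ∂μ = ∫ x in s, f x ∂μ := by
  simp_rw [← indicator_mul_left, Pi.one_apply, one_mul]
  exact integral_indicator hs

noncomputable def autocorrelation (L : ℝ → ℝ) (a : ℝ) : ℝ := ∫ x, L x * L (x + a)

section Autocorrelation

variable {L : ℝ → ℝ}

theorem integral_sub_comp_add_sq (hL : MemLp L 2) (h : ℝ) :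
    ∫ x, (L (x + h) - L x) ^ 2 = 2 * (autocorrelation L 0 - autocorrelation L h) := by
  have hLh : MemLp (fun x => L (x + h)) 2 :=
    hL.comp_measurePreserving (measurePreserving_add_right volume h)
  have hhh : Integrable (fun x => L (x + h) * L (x + h)) := hLh.integrable_mul hLh
  have h00 : Integrable (fun x => L x * L x) := hL.integrable_mul hL
  have h0h : Integrable (fun x => L x * L (x + h)) := hL.integrable_mul hLh
  have hsum : Integrable (fun x => L (x + h) * L (x + h) + L x * L x) := hhh.add h00
  have hsq (x : ℝ) : (L (x + h) - L x) ^ 2 =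
      L (x + h) * L (x + h) + L x * L x - 2 * (L x * L (x + h)) := by ring
  simp_rw [hsq]
  rw [integral_sub hsum (h0h.const_mul 2), integral_add hhh h00, integral_const_mul,
    integral_add_right_eq_self (fun x => L x * L x) h]
  simp only [autocorrelation, add_zero]
  ring

theorem continuous_autocorrelation (hL : Continuous L) (hLi : Integrable L)
    {C : ℝ} (hC : ∀ x, ‖L x‖ ≤ C) : Continuous (autocorrelation L) := by
  refine continuous_of_dominated (bound := fun x => |L x| * C)
    (fun a => (hL.mul (hL.comp (continuous_add_const a))).aestronglyMeasurable)
    (fun a => ae_of_all _ fun x => ?_) (hLi.abs.mul_const C)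
    (ae_of_all _ fun x => continuous_const.mul (hL.comp (continuous_const.add continuous_id)))
  rw [Real.norm_eq_abs, abs_mul]
  exact mul_le_mul_of_nonneg_left (hC _) (abs_nonneg _)

theorem integral_convolution_mul_eq_integral_mul_autocorrelation {φ : ℝ → ℝ}
    (hφ : Measurable φ) {C : ℝ} (hC : ∀ x, |φ x| ≤ C) (hLm : Measurable L) (hL : Integrable L) :
    ∫ y, (∫ x, φ (y - x) * L x) * L y = ∫ a, φ a * autocorrelation L a := by
  set K : ℝ × ℝ → ℝ := fun p => L p.1 * (φ (p.2 - p.1) * L p.2)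
  have hK : Integrable K (volume.prod volume) := by
    refine ((hL.mul_prod hL).norm.const_mul C).mono'
      ((hLm.comp measurable_fst).mul ((hφ.comp (measurable_snd.sub measurable_fst)).mul
        (hLm.comp measurable_snd))).aestronglyMeasurable (ae_of_all _ fun p => ?_)
    simp only [K, norm_mul, Real.norm_eq_abs]
    nlinarith [hC (p.2 - p.1), mul_nonneg (abs_nonneg (L p.1)) (abs_nonneg (L p.2))]
  have hshear := measurePreserving_prod_add (volume : Measure ℝ) volume
  have hKshear : Integrable (K ∘ MeasurableEquiv.shearAddRight ℝ) (volume.prod volume) :=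
    (hshear.integrable_comp_emb (MeasurableEquiv.shearAddRight ℝ).measurableEmbedding).2 hK
  calc ∫ y, (∫ x, φ (y - x) * L x) * L y = ∫ y, ∫ x, K (x, y) := by
        congr 1 with y
        rw [← integral_mul_const]
        congr 1 with x
        ring
    _ = ∫ p, K p ∂(volume.prod volume) := (integral_prod_symm K hK).symm
    _ = ∫ p, K (MeasurableEquiv.shearAddRight ℝ p) ∂(volume.prod volume) :=
        (hshear.integral_comp' K).symm
    _ = ∫ a, φ a * autocorrelation L a := by
        refine (integral_prod_symm _ hKshear).trans ?_
        congr 1 with a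
        rw [autocorrelation, ← integral_const_mul]
        congr 1 with x
        change L x * (φ (x + a - x) * L (x + a)) = φ a * (L x * L (x + a))
        rw [add_sub_cancel_left]
        ring

end Autocorrelation

def IsOccupationDensity (W : ℝ → ℝ) (t : ℝ) (L : ℝ → ℝ) : Prop :=
  ∀ φ : ℝ → ℝ, Measurable φ → (∃ C, ∀ x, |φ x| ≤ C) →
    ∫ s in (0:ℝ)..t, φ (W s) = ∫ x, φ x * L x

def IsSelfIntersectionDensity (W : ℝ → ℝ) (t : ℝ) (α : ℝ → ℝ) : Prop :=
  ∀ φ : ℝ → ℝ, Measurable φ → (∃ C, ∀ x, |φ x| ≤ C) →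
    ∫ s in (0:ℝ)..t, ∫ r in (0:ℝ)..s, φ (W s - W r) = ∫ a, φ a * α a

section OccupationDensities

variable {W L α φ : ℝ → ℝ} {t C : ℝ}

theorem IsOccupationDensity.intervalIntegral_square_comp_sub (hocc : IsOccupationDensity W t L)
    (hLm : Measurable L) (hL : Integrable L) (hφ : Measurable φ) (hC : ∀ x, |φ x| ≤ C) :
    ∫ s in 0..t, ∫ r in 0..t, φ (W s - W r) = ∫ a, φ a * autocorrelation L a := by
  set g : ℝ → ℝ := fun y => ∫ x, φ (y - x) * L x
  have hg_meas : Measurable g :=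
    (StronglyMeasurable.integral_prod_right' (f := fun p : ℝ × ℝ => φ (p.1 - p.2) * L p.2)
      ((hφ.comp (measurable_fst.sub measurable_snd)).mul
        (hLm.comp measurable_snd)).stronglyMeasurable).measurable
  have hg_bdd (y : ℝ) : |g y| ≤ C * ∫ x, |L x| := by
    rw [← integral_const_mul C fun x => |L x|, ← Real.norm_eq_abs]
    refine norm_integral_le_of_norm_le (hL.abs.const_mul C) (ae_of_all _ fun x => ?_)
    rw [Real.norm_eq_abs, abs_mul]
    exact mul_le_mul_of_nonneg_right (hC _) (abs_nonneg _)
  have hinner (s : ℝ) : ∫ r in 0..t, φ (W s - W r) = g (W s) :=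
    hocc (fun x => φ (W s - x)) (hφ.comp (measurable_const.sub measurable_id)) ⟨C, fun x => hC _⟩
  calc ∫ s in 0..t, ∫ r in 0..t, φ (W s - W r) = ∫ s in 0..t, g (W s) := by simp_rw [hinner]
    _ = ∫ y, g y * L y := hocc g hg_meas ⟨_, hg_bdd⟩
    _ = ∫ a, φ a * autocorrelation L a :=
        integral_convolution_mul_eq_integral_mul_autocorrelation hφ hC hLm hL

theorem IsSelfIntersectionDensity.intervalIntegral_square_comp_sub
    (hα : IsSelfIntersectionDensity W t α) (ht : 0 ≤ t) (hW : Measurable W)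
    (hφ : Measurable φ) (hC : ∀ x, |φ x| ≤ C) :
    ∫ s in 0..t, ∫ r in 0..t, φ (W s - W r) = (∫ a, φ a * α a) + ∫ a, φ a * α (-a) := by
  have hk : Integrable (uncurry fun s r => φ (W s - W r))
      ((volume.restrict (Ioc 0 t)).prod (volume.restrict (Ioc 0 t))) :=
    Integrable.of_bound (hφ.comp ((hW.comp measurable_fst).sub
      (hW.comp measurable_snd))).aestronglyMeasurable C (ae_of_all _ fun _ => hC _)
  have hflip : ∫ s in 0..t, ∫ r in 0..s, φ (W r - W s) =
      ∫ s in 0..t, ∫ r in 0..s, (fun x => φ (-x)) (W s - W r) := by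
    simp only [neg_sub]
  have hneg := integral_neg_eq_self (fun a => φ a * α (-a)) volume
  simp only [neg_neg] at hneg
  have hφneg : Measurable fun x => φ (-x) := hφ.comp measurable_neg
  rw [intervalIntegral_square_eq_triangle_add_triangle_swap ht hk, hα φ hφ ⟨C, hC⟩, hflip,
    hα _ hφneg ⟨C, fun x => hC _⟩, hneg]

theorem IsOccupationDensity.autocorrelation_eq (hocc : IsOccupationDensity W t L)
    (hα : IsSelfIntersectionDensity W t α) (ht : 0 ≤ t) (hW : Measurable W) (hL : Continuous L)
    (hLs : HasCompactSupport L) (hαc : Continuous α) (a : ℝ) :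
    autocorrelation L a = α a + α (-a) := by
  have hLi : Integrable L := hL.integrable_of_hasCompactSupport hLs
  obtain ⟨C, hC⟩ := hL.bounded_above_of_compact_support hLs
  refine congrFun (Continuous.eq_of_forall_setIntegral_isCompact_eq (μ := volume)
    (g := fun a => α a + α (-a)) (continuous_autocorrelation hL hLi hC) (by fun_prop)
    fun K hK => ?_) a
  have hφ : Measurable (K.indicator (1 : ℝ → ℝ)) := measurable_one.indicator hK.measurableSet
  have hφC (x : ℝ) : |K.indicator (1 : ℝ → ℝ) x| ≤ 1 := by
    by_cases hx : x ∈ K <;> simp [hx]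
  have hsquare := (hocc.intervalIntegral_square_comp_sub hL.measurable hLi hφ hφC).symm.trans
    (hα.intervalIntegral_square_comp_sub ht hW hφ hφC)
  simp only [integral_indicator_one_mul hK.measurableSet] at hsquare
  have hαneg : Continuous fun x => α (-x) := hαc.comp continuous_neg
  rw [hsquare, integral_add (hαc.locallyIntegrable.integrableOn_isCompact hK)
    (hαneg.locallyIntegrable.integrableOn_isCompact hK)]

end OccupationDensities

/-- Under the occupation-formula assumptions on the local time `L` and the
self-intersection local time `α`,
`∫ (L^{x+h} − L^x)² dx = 2(2α(0) − α(h) − α(−h))`. -/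
theorem L2_modulus_via_silt (W : ℝ → ℝ) (hW : Continuous W)
    (t : ℝ) (ht : 0 ≤ t)
    (L : ℝ → ℝ) (hLcont : Continuous L) (hLsupp : HasCompactSupport L)
    (hocc : ∀ φ : ℝ → ℝ, Measurable φ → (∃ C, ∀ x, |φ x| ≤ C) →
      ∫ s in (0:ℝ)..t, φ (W s) = ∫ x, φ x * L x)
    (α : ℝ → ℝ) (hαcont : Continuous α)
    (hαocc : ∀ φ : ℝ → ℝ, Measurable φ → (∃ C, ∀ x, |φ x| ≤ C) →
      ∫ s in (0:ℝ)..t, ∫ r in (0:ℝ)..s, φ (W s - W r) = ∫ a, φ a * α a)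
    (h : ℝ) :
    ∫ x, (L (x + h) - L x)^2 = 2 * (2 * α 0 - α h - α (-h)) := by
  have hF : ∀ a, autocorrelation L a = α a + α (-a) :=
    IsOccupationDensity.autocorrelation_eq hocc hαocc ht hW.measurable hLcont hLsupp hαcont
  rw [integral_sub_comp_add_sq (hLcont.memLp_of_hasCompactSupport hLsupp) h, hF, hF, neg_zero]
  ring
end

section
/- Let γ : ℝ → ℝ be C¹ and let v(x) = e^{−|x|}. Define for fixed x,y ∈ [0,1] the combination A(h) = F(h(x−y), hy) − F(h(−x−y), hy) − F(h(x+y), −hy) + F(−h(x−y), −hy), where F(a,b) = γ_3(a,b) + γ(a)v(b) + γ(b)v(a) + t·v(a)v(b), with γ_3 : ℝ² → ℝ of class C¹ and t ∈ ℝ. Then A(h) = 2h(|x+y| − |x−y|)(γ(0) + t v(0)) + o(h) as h → 0. -/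
open Filter Topology Asymptotics

/-!
Group the four values of `F` by summand. The `γ₃`-terms and the `γ(a) v(b)`-terms form second
differences `f(h c₁) - f(h c₂) - f(h c₃) + f(h c₄)` with `c₁ - c₂ - c₃ + c₄ = 0`, so their linear
parts cancel and they are `o(h)` for any `f` differentiable at `0`. Since `v` is even, the remaining
terms collapse to `C(h) (v(h(x-y)) - v(h(x+y)))` with `C(h) → 2(γ(0) + t v(0))`, and for `h > 0`
the kink of `v` at `0` gives `v(h(x-y)) - v(h(x+y)) = h(|x+y| - |x-y|) + o(h)`.
-/

section SecondDifference

variable {𝕜 E F : Type*} [NontriviallyNormedField 𝕜]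
  [NormedAddCommGroup E] [NormedSpace 𝕜 E] [NormedAddCommGroup F] [NormedSpace 𝕜 F]

theorem DifferentiableAt.hasDerivAt_comp_smul {f : E → F} (hf : DifferentiableAt 𝕜 f 0)
    (c : E) : HasDerivAt (fun h : 𝕜 => f (h • c)) (fderiv 𝕜 f 0 c) 0 := by
  have hline : HasDerivAt (fun h : 𝕜 => h • c) c 0 := by
    simpa using (hasDerivAt_id (0 : 𝕜)).smul_const c
  have hf' : HasFDerivAt f (fderiv 𝕜 f 0) ((0 : 𝕜) • c) := by
    simpa using hf.hasFDerivAt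
  exact hf'.comp_hasDerivAt 0 hline

theorem DifferentiableAt.isLittleO_sub_sub_add_comp_smul {f : E → F}
    (hf : DifferentiableAt 𝕜 f 0) {c₁ c₂ c₃ c₄ : E} (hc : c₁ - c₂ - c₃ + c₄ = 0) :
    (fun h : 𝕜 => f (h • c₁) - f (h • c₂) - f (h • c₃) + f (h • c₄)) =o[𝓝 0] fun h => h := by
  have hderiv := (((hf.hasDerivAt_comp_smul c₁).sub (hf.hasDerivAt_comp_smul c₂)).sub
    (hf.hasDerivAt_comp_smul c₃)).add (hf.hasDerivAt_comp_smul c₄)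
  rw [← map_sub, ← map_sub, ← map_add, hc, map_zero, hasDerivAt_iff_isLittleO] at hderiv
  simpa using hderiv

end SecondDifference

theorem hasDerivWithinAt_exp_neg_abs_mul_Ioi (a : ℝ) :
    HasDerivWithinAt (fun h => Real.exp (-|h * a|)) (-|a|) (Set.Ioi 0) 0 := by
  have hlin : HasDerivAt (fun h : ℝ => Real.exp (-(h * |a|))) (-|a|) 0 := by
    simpa using ((hasDerivAt_mul_const (x := (0 : ℝ)) |a|).neg).exp
  refine hlin.hasDerivWithinAt.congr (fun h (hh : 0 < h) => ?_) (by simp)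
  rw [abs_mul, abs_of_pos hh]

theorem isLittleO_exp_neg_abs_mul_sub_exp_neg_abs_mul (a b : ℝ) :
    (fun h : ℝ => Real.exp (-|h * a|) - Real.exp (-|h * b|) - (|b| - |a|) * h)
      =o[𝓝[>] 0] fun h => h := by
  have hderiv := ((hasDerivWithinAt_exp_neg_abs_mul_Ioi a).sub
    (hasDerivWithinAt_exp_neg_abs_mul_Ioi b)).isLittleO
  simp only [Pi.sub_apply, zero_mul, abs_zero, neg_zero, sub_self, sub_zero, smul_eq_mul]
    at hderiv
  exact hderiv.congr_left fun h => by ring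

theorem Filter.Tendsto.isLittleO_mul_sub_mul {α 𝕜 : Type*} [NormedField 𝕜] {l : Filter α}
    {C D E : α → 𝕜} {c : 𝕜} {g : α → ℝ} (hC : Tendsto C l (𝓝 c))
    (hDE : (fun a => D a - E a) =o[l] g) (hE : E =O[l] g) :
    (fun a => C a * D a - c * E a) =o[l] g := by
  have hC' : (fun a => C a - c) =o[l] fun _ => (1 : ℝ) :=
    (isLittleO_one_iff ℝ).2 (tendsto_sub_nhds_zero_iff.2 hC)
  have hsum := (hC.isBigO_one ℝ).mul_isLittleO hDE |>.add (hC'.mul_isBigO hE)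
  simp only [one_mul] at hsum
  exact hsum.congr_left fun a => by ring

theorem key_taylor_expansion_general (γ₃ : ℝ × ℝ → ℝ) (hγ₃ : ContDiff ℝ 1 γ₃)
    (γ : ℝ → ℝ) (hγ : ContDiff ℝ 1 γ) (t : ℝ)
    (v : ℝ → ℝ) (hv : ∀ x, v x = Real.exp (-|x|))
    (F : ℝ → ℝ → ℝ)
    (hF : ∀ a b, F a b = γ₃ (a, b) + γ a * v b + γ b * v a + t * v a * v b)
    (x y : ℝ) :
    (fun h : ℝ =>
        (F (h * (x - y)) (h * y) - F (h * (-x - y)) (h * y)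
          - F (h * (x + y)) (-(h * y)) + F (-(h * (x - y))) (-(h * y)))
        - 2 * h * (|x + y| - |x - y|) * (γ 0 + t * v 0))
      =o[𝓝[>] (0:ℝ)] (fun h => h) := by
  simp only [hv] at hF ⊢
  have hγ₃_part := (hγ₃.differentiable one_ne_zero 0).isLittleO_sub_sub_add_comp_smul
    (c₁ := (x - y, y)) (c₂ := (-x - y, y)) (c₃ := (x + y, -y)) (c₄ := (-(x - y), -y))
    (by ext <;> simp)
  have hγ_part := (hγ.differentiable one_ne_zero 0).isLittleO_sub_sub_add_comp_smul
    (c₁ := x - y) (c₂ := -x - y) (c₃ := x + y) (c₄ := -(x - y)) (by ring)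
  have hv_bdd : (fun h : ℝ => Real.exp (-|h * y|)) =O[𝓝 0] fun _ => (1 : ℝ) :=
    ((show Continuous fun h : ℝ => Real.exp (-|h * y|) by fun_prop).tendsto 0).isBigO_one ℝ
  have hC : Tendsto (fun h : ℝ => γ (h * y) + γ (-(h * y)) + 2 * t * Real.exp (-|h * y|))
      (𝓝[>] 0) (𝓝 (2 * (γ 0 + t * Real.exp (-|0|)))) := by
    have hcont : Continuous fun h : ℝ => γ (h * y) + γ (-(h * y)) + 2 * t * Real.exp (-|h * y|) :=
      by have := hγ.continuous; fun_prop
    convert (hcont.tendsto 0).mono_left nhdsWithin_le_nhds using 2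
    simp only [zero_mul, neg_zero]; ring
  have hsum := ((hγ₃_part.add ((hv_bdd.mul_isLittleO hγ_part).congr_right fun _ => one_mul _)).mono
    nhdsWithin_le_nhds).add (hC.isLittleO_mul_sub_mul
      (isLittleO_exp_neg_abs_mul_sub_exp_neg_abs_mul (x - y) (x + y)) (isBigO_const_mul_self _ _ _))
  refine hsum.congr_left fun h => ?_
  have hreflect₁ : h * (-x - y) = -(h * (x + y)) := by ring
  have hreflect₂ : h * -(x - y) = -(h * (x - y)) := by ring
  simp only [hF, Prod.smul_mk, smul_eq_mul, hreflect₁, hreflect₂, mul_neg, abs_neg]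
  ring

/-- The key Taylor-expansion computation: for `F(a,b) = γ₃(a,b) + γ(a)v(b) +
γ(b)v(a) + t·v(a)v(b)` with `γ₃, γ` of class `C¹` and `v(x) = e^{−|x|}`, the
combination
`A(h) = F(h(x−y),hy) − F(h(−x−y),hy) − F(h(x+y),−hy) + F(−h(x−y),−hy)`
satisfies `A(h) = 2h(|x+y|−|x−y|)(γ(0) + t v(0)) + o(h)` as `h ↓ 0`. -/
theorem key_taylor_expansion (γ₃ : ℝ × ℝ → ℝ) (hγ₃ : ContDiff ℝ 1 γ₃)
    (γ : ℝ → ℝ) (hγ : ContDiff ℝ 1 γ) (t : ℝ)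
    (v : ℝ → ℝ) (hv : ∀ x, v x = Real.exp (-|x|))
    (F : ℝ → ℝ → ℝ)
    (hF : ∀ a b, F a b = γ₃ (a, b) + γ a * v b + γ b * v a + t * v a * v b)
    (x y : ℝ) (hx : x ∈ Set.Icc (0:ℝ) 1) (hy : y ∈ Set.Icc (0:ℝ) 1) :
    (fun h : ℝ =>
        (F (h * (x - y)) (h * y) - F (h * (-x - y)) (h * y)
          - F (h * (x + y)) (-(h * y)) + F (-(h * (x - y))) (-(h * y)))
        - 2 * h * (|x + y| - |x - y|) * (γ 0 + t * v 0))
      =o[𝓝[>] (0:ℝ)] (fun h => h) :=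
  key_taylor_expansion_general γ₃ hγ₃ γ hγ t v hv F hF x y
end
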